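/- arXiv:2401.17218 — 3 statements merged into one kernel-verified Lean document; each statement's English description precedes it below -/
import Mathlib

section
/- The m-th sequential distributional topological complexity dTC_m is a homotopy invariant: if f : X → Y is a homotopy domination (i.e., f admits a right homotopy inverse g : Y → X with f ∘ g homotopic to the identity of Y), then dTC_m(Y) ≤ dTC_m(X). In particular, homotopy equivalent path-connected metric spaces have equal dTC_m for every m ≥ 2. -/
/-!
Let `H` be a homotopy from `f ∘ g` to `id_Y` and `s` a navigation algorithm on `X`. For
`y ∈ Yᵐ`, push the measure `s (g ∘ y)` forward along the map sending a path `φ` of `X` through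
the points `g yₖ` to the path of `Y` which, on `[tₖ, tₖ₊₁]`, runs `H` backwards from `yₖ` to
`f (g yₖ) = f (φ tₖ)`, follows `f ∘ φ` up to `f (φ tₖ₊₁) = f (g yₖ₊₁)`, and runs `H` forwards to
`yₖ₊₁`. This transport map is continuous only on the pairs `(y, φ)` with `φ` passing through
`g ∘ y`, but that is where the measures `s (g ∘ y)` live, and pushing finitely supported measures
forward along maps that are continuous on their supports is continuous for the Lévy–Prokhorov
metric.
-/

open MeasureTheory unitInterval

noncomputable section

/-- The path space `P(X) = C([0,1], X)` with the compact-open topology. -/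
abbrev PathSp (X : Type*) [TopologicalSpace X] : Type _ := C(unitInterval, X)

/-- The space `B_n(Z)` of probability measures on a metric space `Z` supported on at most
`n` points, as a subspace of the space of probability measures with the Lévy–Prokhorov metric. -/
def Bmeas (n : ℕ) (Z : Type*) [MetricSpace Z] : Type _ :=
  letI : MeasurableSpace Z := borel Z
  {μ : LevyProkhorov (ProbabilityMeasure Z) //
    ∃ S : Finset Z, S.card ≤ n ∧ (LevyProkhorov.toMeasureEquiv μ : ProbabilityMeasure Z) (↑S : Set Z) = 1}

noncomputable instance (n : ℕ) (Z : Type*) [MetricSpace Z] : TopologicalSpace (Bmeas n Z) :=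
  letI : MeasurableSpace Z := borel Z
  haveI : BorelSpace Z := ⟨rfl⟩
  instTopologicalSpaceSubtype

/-- The underlying probability measure of an element of `B_n(Z)`. -/
def Bmeas.meas {n : ℕ} {Z : Type*} [MetricSpace Z] (μ : Bmeas n Z) :
    @ProbabilityMeasure Z (borel Z) :=
  LevyProkhorov.toMeasureEquiv μ.1

/-- `μ ∈ B_n(Z)` is supported on the set `A`. -/
def DistributedOn {Z : Type*} [MetricSpace Z] {n : ℕ} (μ : Bmeas n Z) (A : Set Z) : Prop :=
  ∃ S : Finset Z, (↑S : Set Z) ⊆ A ∧ Bmeas.meas μ (↑S : Set Z) = 1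

/-- The time points `t_j = j/(m-1)`, `j = 0, …, m-1`, in `[0,1]`. -/
def tpt (m : ℕ) (j : Fin m) : unitInterval :=
  Set.projIcc 0 1 zero_le_one ((j : ℝ) / ((m : ℝ) - 1))

/-- A `k`-distributed `m`-navigation algorithm on `X`. -/
def IsNavAlg (m k : ℕ) {X : Type*} [MetricSpace X]
    (s : (Fin m → X) → Bmeas k (PathSp X)) : Prop :=
  Continuous s ∧ ∀ x : Fin m → X,
    DistributedOn (s x) {φ : PathSp X | ∀ j : Fin m, φ (tpt m j) = x j}

/-- The `m`-th sequential distributional topological complexity. -/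
noncomputable def dTC (m : ℕ) (X : Type*) [MetricSpace X] : ℕ∞ :=
  sInf {c : ℕ∞ | ∃ k : ℕ, c = k ∧
    ∃ s : (Fin m → X) → Bmeas (k + 1) (PathSp X), IsNavAlg m (k + 1) s}

/-- A `k`-contraction of `Y` to the point `y₀`. -/
def IsContr (k : ℕ) {Y : Type*} [MetricSpace Y] (y₀ : Y)
    (H : Y → Bmeas k (PathSp Y)) : Prop :=
  Continuous H ∧ ∀ y : Y,
    DistributedOn (H y) {φ : PathSp Y | φ 0 = y ∧ φ 1 = y₀}

/-- The distributional Lusternik–Schnirelmann category. -/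
noncomputable def dcat (Y : Type*) [MetricSpace Y] : ℕ∞ :=
  sInf {c : ℕ∞ | ∃ k : ℕ, c = k ∧
    ∃ (y₀ : Y) (H : Y → Bmeas (k + 1) (PathSp Y)), IsContr (k + 1) y₀ H}

/-- The classical `m`-th sequential topological complexity. -/
noncomputable def TCcl (m : ℕ) (X : Type*) [TopologicalSpace X] : ℕ∞ :=
  sInf {c : ℕ∞ | ∃ k : ℕ, c = k ∧
    ∃ (U : Fin (k + 1) → Set (Fin m → X)) (s : ∀ i : Fin (k + 1), C(U i, PathSp X)),
      (∀ i, IsOpen (U i)) ∧ (∀ x, ∃ i, x ∈ U i) ∧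
      ∀ (i : Fin (k + 1)) (x : U i) (j : Fin m), (s i x) (tpt m j) = (x : Fin m → X) j}

section Concat

variable {Y : Type*}

/-- The `k`-th of the paths `γ 0, …, γ (n - 1)` is run on `[k / n, (k + 1) / n]`. -/
def concatPaths (n : ℕ) (γ : ℕ → I → Y) (t : I) : Y :=
  γ (min ⌊n * (t : ℝ)⌋₊ (n - 1))
    (Set.projIcc 0 1 zero_le_one (n * t - min ⌊n * (t : ℝ)⌋₊ (n - 1)))

theorem concatPaths_eq {n k : ℕ} {γ : ℕ → I → Y} (hγ : ∀ k, k + 1 < n → γ k 1 = γ (k + 1) 0)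
    {t : I} (hk : k < n) (h₁ : (k : ℝ) ≤ n * t) (h₂ : n * (t : ℝ) ≤ k + 1) :
    concatPaths n γ t = γ k (Set.projIcc 0 1 zero_le_one (n * t - k)) := by
  unfold concatPaths
  rcases h₂.lt_or_eq with h₂ | h₂
  · rw [(Nat.floor_eq_iff ((Nat.cast_nonneg k).trans h₁)).2 ⟨h₁, h₂⟩, min_eq_left (by omega)]
  · have hfloor : ⌊n * (t : ℝ)⌋₊ = k + 1 := by rw [h₂]; exact_mod_cast Nat.floor_natCast (k + 1)
    rw [hfloor, h₂]
    rcases Nat.lt_or_ge (k + 1) n with hk' | hk'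
    · rw [min_eq_left (by omega), Nat.cast_succ, sub_self, add_sub_cancel_left,
        projIcc_eq_zero.2 le_rfl, projIcc_eq_one.2 le_rfl, hγ k hk']
    · rw [min_eq_right (by omega), show n - 1 = k by omega]

theorem concatPaths_apply_of_mul_eq {n k : ℕ} (γ : ℕ → I → Y) {t : I} (hk : k < n)
    (ht : n * (t : ℝ) = k) : concatPaths n γ t = γ k 0 := by
  unfold concatPaths
  rw [ht, Nat.floor_natCast, min_eq_left (by omega), sub_self, projIcc_eq_zero.2 le_rfl]

theorem concatPaths_one {n : ℕ} (hn : 0 < n) (γ : ℕ → I → Y) :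
    concatPaths n γ 1 = γ (n - 1) 1 := by
  unfold concatPaths
  rw [Set.Icc.coe_one, mul_one, Nat.floor_natCast, min_eq_right (by omega),
    Nat.cast_pred hn, sub_sub_cancel, projIcc_eq_one.2 le_rfl]

theorem exists_concatPaths_piece {n : ℕ} (hn : 0 < n) (t : I) :
    ∃ k < n, (k : ℝ) ≤ n * t ∧ n * (t : ℝ) ≤ k + 1 := by
  have ht : n * (t : ℝ) ≤ n := mul_le_of_le_one_right (Nat.cast_nonneg n) t.2.2
  have ht₀ : 0 ≤ n * (t : ℝ) := mul_nonneg (Nat.cast_nonneg n) t.2.1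
  rcases Nat.lt_or_ge ⌊n * (t : ℝ)⌋₊ n with h | h
  · exact ⟨_, h, Nat.floor_le ht₀, (Nat.lt_floor_add_one _).le⟩
  · refine ⟨n - 1, by omega, ?_, ?_⟩
    · rw [Nat.cast_pred hn]
      linarith [(Nat.le_floor_iff ht₀).1 h]
    · rw [Nat.cast_pred hn]
      linarith

theorem continuous_concatPaths [TopologicalSpace Y] {P : Type*} [TopologicalSpace P] {n : ℕ}
    (hn : 0 < n) {γ : P → ℕ → I → Y} (hγ : ∀ k < n, Continuous fun q : P × I => γ q.1 k q.2)
    (hmatch : ∀ p k, k + 1 < n → γ p k 1 = γ p (k + 1) 0) :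
    Continuous fun q : P × I => concatPaths n (γ q.1) q.2 := by
  have hu : Continuous fun q : P × I => n * (q.2 : ℝ) := by fun_prop
  refine LocallyFinite.continuous (f := fun k : Fin n => {q : P × I |
    (k : ℝ) ≤ n * q.2 ∧ n * (q.2 : ℝ) ≤ k + 1}) (locallyFinite_of_finite _) ?_ ?_ ?_
  · refine Set.eq_univ_of_forall fun q => ?_
    obtain ⟨k, hk, hq⟩ := exists_concatPaths_piece hn q.2
    exact Set.mem_iUnion.2 ⟨⟨k, hk⟩, hq⟩
  · exact fun k => (isClosed_le continuous_const hu).inter (isClosed_le hu continuous_const)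
  · intro k
    have hpiece : Continuous fun q : P × I =>
        (q.1, Set.projIcc (0 : ℝ) 1 zero_le_one (n * q.2 - k)) :=
      continuous_fst.prodMk (continuous_projIcc.comp (hu.sub continuous_const))
    exact ((hγ k k.2).comp hpiece).continuousOn.congr fun q hq => concatPaths_eq (hmatch q.1) k.2 hq.1 hq.2

end Concat

def PathsThrough {X : Type*} [TopologicalSpace X] (m : ℕ) (x : Fin m → X) : Set (PathSp X) :=
  {φ | ∀ j, φ (tpt m j) = x j}

theorem tpt_clamp {n k : ℕ} (hk : k ≤ n) :
    tpt (n + 1) (Fin.clamp k n) = Set.projIcc 0 1 zero_le_one ((k : ℝ) / n) := by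
  simp [tpt, Fin.clamp, min_eq_left hk]

section Transport

variable {X Y : Type*} [TopologicalSpace X] [TopologicalSpace Y] {f : C(X, Y)} {g : C(Y, X)}
  (H : (f.comp g).Homotopy (ContinuousMap.id Y)) (n : ℕ)

def pairsThroughImage (g : C(Y, X)) (m : ℕ) : Set ((Fin m → Y) × PathSp X) :=
  {p | p.2 ∈ PathsThrough m (g ∘ p.1)}

def transportLeg (ys : Fin (n + 1) → Y) (φ : PathSp X) (k : ℕ) : ℕ → I → Y
  | 0 => fun s => H (σ s, ys (Fin.clamp k n))
  | 1 => fun s => f (φ (Set.projIcc 0 1 zero_le_one ((k + s) / n)))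
  | _ => fun s => H (s, ys (Fin.clamp (k + 1) n))

def transportPath (ys : Fin (n + 1) → Y) (φ : PathSp X) : I → Y :=
  concatPaths n fun k => concatPaths 3 (transportLeg H n ys φ k)

theorem continuous_transportLeg (k ℓ : ℕ) :
    Continuous fun q : ((Fin (n + 1) → Y) × PathSp X) × I => transportLeg H n q.1.1 q.1.2 k ℓ q.2 :=
  match ℓ with
  | 0 => by simp only [transportLeg]; fun_prop
  | 1 => by simp only [transportLeg]; fun_prop
  | _ + 2 => by simp only [transportLeg]; fun_prop

theorem transportLeg_match {ys : Fin (n + 1) → Y} {φ : PathSp X}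
    (hφ : (ys, φ) ∈ pairsThroughImage g (n + 1)) {k : ℕ} (hk : k < n) {ℓ : ℕ} (hℓ : ℓ + 1 < 3) :
    transportLeg H n ys φ k ℓ 1 = transportLeg H n ys φ k (ℓ + 1) 0 := by
  obtain rfl | rfl : ℓ = 0 ∨ ℓ = 1 := by omega
  · have hφk := hφ (Fin.clamp k n)
    rw [tpt_clamp hk.le] at hφk
    simp [transportLeg, hφk]
  · have hφk := hφ (Fin.clamp (k + 1) n)
    rw [tpt_clamp hk, Nat.cast_succ] at hφk
    simp [transportLeg, hφk]

theorem concatPaths_transportLeg_zero (ys : Fin (n + 1) → Y) (φ : PathSp X) (k : ℕ) :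
    concatPaths 3 (transportLeg H n ys φ k) 0 = ys (Fin.clamp k n) := by
  rw [concatPaths_apply_of_mul_eq _ three_pos (by simp : (3 : ℝ) * ((0 : I) : ℝ) = (0 : ℕ))]
  simp [transportLeg]

theorem concatPaths_transportLeg_one (ys : Fin (n + 1) → Y) (φ : PathSp X) (k : ℕ) :
    concatPaths 3 (transportLeg H n ys φ k) 1 = ys (Fin.clamp (k + 1) n) := by
  simp [concatPaths_one three_pos, transportLeg]

theorem transportPath_apply_tpt (hn : 0 < n) (ys : Fin (n + 1) → Y) (φ : PathSp X)
    (j : Fin (n + 1)) : transportPath H n ys φ (tpt (n + 1) j) = ys j := by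
  rcases (Nat.lt_succ_iff.1 j.2).lt_or_eq with h | h
  · have hj : Fin.clamp j n = j := Fin.ext (min_eq_left h.le)
    have hj₁ : (j : ℝ) / n ∈ Set.Icc (0 : ℝ) 1 :=
      ⟨by positivity, div_le_one_of_le₀ (by exact_mod_cast h.le) (by positivity)⟩
    have ht : n * (Set.projIcc (0 : ℝ) 1 zero_le_one (j / n) : ℝ) = j := by
      rw [Set.projIcc_of_mem _ hj₁]
      field_simp
    rw [← hj, tpt_clamp h.le, transportPath, concatPaths_apply_of_mul_eq _ h ht,
      concatPaths_transportLeg_zero]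
  · obtain rfl : j = Fin.last n := Fin.ext h
    have h1 : tpt (n + 1) (Fin.last n) = 1 := by
      rw [← Fin.clamp_eq_last n n le_rfl, tpt_clamp le_rfl, div_self (by positivity),
        projIcc_eq_one.2 le_rfl]
    rw [h1, transportPath, concatPaths_one hn, concatPaths_transportLeg_one, Nat.sub_add_cancel hn,
      Fin.clamp_eq_last n n le_rfl]

theorem continuous_transportPath (hn : 0 < n) :
    Continuous fun q : pairsThroughImage g (n + 1) × I =>
      transportPath H n q.1.1.1 q.1.1.2 q.2 := by
  refine continuous_concatPaths (γ := fun (p : pairsThroughImage g (n + 1)) k =>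
    concatPaths 3 (transportLeg H n p.1.1 p.1.2 k)) hn (fun k hk => ?_) fun p k _ => ?_
  · refine continuous_concatPaths (γ := fun (p : pairsThroughImage g (n + 1)) =>
      transportLeg H n p.1.1 p.1.2 k) three_pos (fun ℓ _ => ?_) fun p ℓ hℓ =>
        transportLeg_match H n p.2 hk hℓ
    exact (continuous_transportLeg H n k ℓ).comp
      ((continuous_subtype_val.comp continuous_fst).prodMk continuous_snd)
  · rw [concatPaths_transportLeg_one, concatPaths_transportLeg_zero]

end Transport

section TransportMap

variable {X Y : Type*} [TopologicalSpace X] [TopologicalSpace Y] {f : C(X, Y)} {g : C(Y, X)}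
  (H : (f.comp g).Homotopy (ContinuousMap.id Y)) {n : ℕ} (hn : 0 < n)

open Classical in
def transportMap (p : (Fin (n + 1) → Y) × PathSp X) : PathSp Y :=
  if h : p ∈ pairsThroughImage g (n + 1) then
    ContinuousMap.curry ⟨_, continuous_transportPath H n hn⟩ ⟨p, h⟩
  else ContinuousMap.const I (p.1 0)

theorem continuousOn_transportMap :
    ContinuousOn (transportMap H hn) (pairsThroughImage g (n + 1)) := by
  rw [continuousOn_iff_continuous_domRestrict]
  convert (ContinuousMap.curry ⟨_, continuous_transportPath H n hn⟩).continuous using 1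
  exact funext fun p => dif_pos p.2

theorem transportMap_mem_pathsThrough {p : (Fin (n + 1) → Y) × PathSp X}
    (hp : p ∈ pairsThroughImage g (n + 1)) : transportMap H hn p ∈ PathsThrough (n + 1) p.1 := by
  intro j
  rw [transportMap, dif_pos hp]
  exact transportPath_apply_tpt H n hn p.1 p.2 j

end TransportMap

section ConcentratedMeasure

variable {Z W : Type*} [MeasurableSpace Z] [MeasurableSingletonClass Z] [MeasurableSpace W]
  {μ : Measure Z} {S : Set Z}

theorem aemeasurable_of_measure_compl_eq_zero (hS : S.Countable) (hμ : μ Sᶜ = 0) (F : Z → W) :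
    AEMeasurable F μ := by
  rw [← Measure.restrict_eq_self_of_ae_mem (mem_ae_iff.2 hμ),
    aemeasurable_restrict_iff_comap_subtype hS.measurableSet]
  have := hS.to_subtype
  exact (measurable_of_countable _).aemeasurable

theorem map_apply_of_measure_compl_eq_zero (hS : S.Countable) (hμ : μ Sᶜ = 0) (F : Z → W)
    {B : Set W} (hB : MeasurableSet B) : μ.map F B = μ (S ∩ F ⁻¹' B) := by
  rw [Measure.map_apply_of_aemeasurable (aemeasurable_of_measure_compl_eq_zero hS hμ F) hB,
    Set.inter_comm, measure_inter_conull hμ]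

theorem map_compl_image_eq_zero [MeasurableSingletonClass W] (hS : S.Countable) (hμ : μ Sᶜ = 0)
    (F : Z → W) : μ.map F (F '' S)ᶜ = 0 := by
  have hempty : S ∩ F ⁻¹' (F '' S)ᶜ = ∅ :=
    Set.eq_empty_of_forall_notMem fun z ⟨hz, hz'⟩ => hz' (Set.mem_image_of_mem F hz)
  rw [map_apply_of_measure_compl_eq_zero hS hμ F (hS.image F).measurableSet.compl, hempty,
    measure_empty]

end ConcentratedMeasure

theorem MeasureTheory.ProbabilityMeasure.coeFn_eq_one_iff {Z : Type*} [MeasurableSpace Z]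
    {ν : ProbabilityMeasure Z} {S : Set Z} (hS : MeasurableSet S) :
    ν S = 1 ↔ ν.toMeasure Sᶜ = 0 := by
  rw [prob_compl_eq_zero_iff hS, ← ProbabilityMeasure.ennreal_coeFn_eq_coeFn_toMeasure,
    ENNReal.coe_eq_one]

theorem MeasureTheory.ProbabilityMeasure.map_image_eq_one {Z W : Type*} [MeasurableSpace Z]
    [MeasurableSingletonClass Z] [MeasurableSpace W] [MeasurableSingletonClass W]
    {ν : ProbabilityMeasure Z} {S : Set Z} (hS : S.Countable) (hνS : ν S = 1) {F : Z → W}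
    (hF : AEMeasurable F ν) : ν.map hF (F '' S) = 1 := by
  rw [coeFn_eq_one_iff (hS.image F).measurableSet, toMeasure_map]
  exact map_compl_image_eq_zero hS ((coeFn_eq_one_iff hS.measurableSet).1 hνS) F

open Metric in
theorem levyProkhorovEDist_map_le {Z W : Type*} [PseudoMetricSpace Z] [MeasurableSpace Z]
    [MeasurableSingletonClass Z] [PseudoMetricSpace W] [MeasurableSpace W]
    [OpensMeasurableSpace W] {μ ν : Measure Z} [IsProbabilityMeasure μ] [IsProbabilityMeasure ν]
    {S T : Set Z} (hS : S.Countable) (hμ : μ Sᶜ = 0) (hT : T.Countable) (hν : ν Tᶜ = 0)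
    {r c : ℝ} (hμν : levyProkhorovEDist μ ν < ENNReal.ofReal r) (hrc : r ≤ c) {F G : Z → W}
    (hFG : ∀ z ∈ S, ∀ z' ∈ T, dist z z' < r → dist (F z) (G z') < c) :
    levyProkhorovEDist (μ.map F) (ν.map G) ≤ ENNReal.ofReal c := by
  have := Measure.isProbabilityMeasure_map (aemeasurable_of_measure_compl_eq_zero hS hμ F)
  have := Measure.isProbabilityMeasure_map (aemeasurable_of_measure_compl_eq_zero hT hν G)
  have hr : 0 < r := ENNReal.ofReal_pos.1 (pos_of_gt hμν)
  refine levyProkhorovEDist_le_of_forall_le _ _ _ fun ε B hε hε_top hB => ?_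
  have hcε : c < ε.toReal := (ENNReal.ofReal_lt_iff_lt_toReal (hr.le.trans hrc) hε_top.ne).1 hε
  have hsub : T ∩ thickening r (S ∩ F ⁻¹' B) ⊆ T ∩ G ⁻¹' thickening ε.toReal B := by
    rintro z' ⟨hz', hz'B⟩
    obtain ⟨z, ⟨hz, hzB⟩, hzz'⟩ := mem_thickening_iff.1 hz'B
    refine ⟨hz', mem_thickening_iff.2 ⟨F z, hzB, ?_⟩⟩
    rw [dist_comm]
    exact (hFG z hz z' hz' (by rwa [dist_comm])).trans hcε
  calc μ.map F B = μ (S ∩ F ⁻¹' B) := map_apply_of_measure_compl_eq_zero hS hμ F hB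
    _ ≤ ν (thickening r (S ∩ F ⁻¹' B)) + ENNReal.ofReal r := by
      simpa [ENNReal.toReal_ofReal hr.le] using
        left_measure_le_of_levyProkhorovEDist_lt hμν (hS.mono Set.inter_subset_left).measurableSet
    _ = ν (T ∩ thickening r (S ∩ F ⁻¹' B)) + ENNReal.ofReal r := by
      rw [Set.inter_comm T, measure_inter_conull hν]
    _ ≤ ν (T ∩ G ⁻¹' thickening ε.toReal B) + ε :=
      add_le_add (measure_mono hsub) ((ENNReal.ofReal_le_ofReal hrc).trans hε.le)
    _ = ν.map G (thickening ε.toReal B) + ε := by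
      rw [map_apply_of_measure_compl_eq_zero hT hν G isOpen_thickening.measurableSet]

open Metric Topology in
theorem ContinuousOn.exists_pos_forall_dist_lt_of_finite {α β : Type*} [PseudoMetricSpace α]
    [PseudoMetricSpace β] {F : α → β} {E K : Set α} (hF : ContinuousOn F E) (hK : K.Finite)
    (hKE : K ⊆ E) {ε : ℝ} (hε : 0 < ε) :
    ∃ δ > 0, ∀ x ∈ K, ∀ y ∈ E, dist y x < δ → dist (F y) (F x) < ε := by
  have hx : ∀ x ∈ K, ∀ᶠ δ in 𝓝[>] (0 : ℝ), ∀ y ∈ E, dist y x < δ → dist (F y) (F x) < ε := by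
    intro x hx
    obtain ⟨δ, hδ, h⟩ := Metric.continuousWithinAt_iff.1 (hF x (hKE hx)) ε hε
    filter_upwards [Ioo_mem_nhdsGT hδ] with δ' hδ' y hy hyx using h hy (hyx.trans hδ'.2)
  obtain ⟨δ, hδ, hδ₀⟩ := ((hK.eventually_all.2 hx).and self_mem_nhdsWithin).exists
  exact ⟨δ, hδ₀, hδ⟩

theorem DistributedOn.mono {Z : Type*} [MetricSpace Z] {n : ℕ} {μ : Bmeas n Z} {A B : Set Z}
    (hA : DistributedOn μ A) (hAB : A ⊆ B) : DistributedOn μ B :=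
  let ⟨S, hSA, hS⟩ := hA
  ⟨S, hSA.trans hAB, hS⟩

namespace Bmeas

attribute [local instance] borel

variable {n : ℕ} {Z W : Type*} [MetricSpace Z] [MetricSpace W]

theorem toMeasure_meas_compl_eq_zero {μ : Bmeas n Z} {S : Finset Z} (hS : μ.meas S = 1) :
    μ.meas.toMeasure (↑S)ᶜ = 0 := by
  have : BorelSpace Z := ⟨rfl⟩
  exact (ProbabilityMeasure.coeFn_eq_one_iff S.finite_toSet.measurableSet).1 hS

theorem aemeasurable (μ : Bmeas n Z) (F : Z → W) : AEMeasurable F μ.meas.toMeasure := by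
  have : BorelSpace Z := ⟨rfl⟩
  obtain ⟨S, -, hS⟩ := μ.2
  exact aemeasurable_of_measure_compl_eq_zero S.countable_toSet (toMeasure_meas_compl_eq_zero hS) F

def push (F : Z → W) (μ : Bmeas n Z) : Bmeas n W :=
  ⟨LevyProkhorov.toMeasureEquiv.symm (μ.meas.map (μ.aemeasurable F)), by
    classical
    have : BorelSpace Z := ⟨rfl⟩
    have : BorelSpace W := ⟨rfl⟩
    obtain ⟨S, hcard, hS⟩ := μ.2
    refine ⟨S.image F, Finset.card_image_le.trans hcard, ?_⟩
    rw [Finset.coe_image]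
    exact ProbabilityMeasure.map_image_eq_one S.countable_toSet hS (μ.aemeasurable F)⟩

theorem toMeasure_meas_push (F : Z → W) (μ : Bmeas n Z) :
    (μ.push F).meas.toMeasure = μ.meas.toMeasure.map F :=
  ProbabilityMeasure.toMeasure_map _ (μ.aemeasurable F)

theorem _root_.DistributedOn.push {μ : Bmeas n Z} {A : Set Z} (hμ : DistributedOn μ A)
    (F : Z → W) : DistributedOn (μ.push F) (F '' A) := by
  classical
  have : BorelSpace Z := ⟨rfl⟩
  have : BorelSpace W := ⟨rfl⟩
  obtain ⟨S, hSA, hS⟩ := hμ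
  refine ⟨S.image F, by simpa using Set.image_mono hSA, ?_⟩
  rw [Finset.coe_image]
  exact ProbabilityMeasure.map_image_eq_one S.countable_toSet hS (μ.aemeasurable F)

theorem continuous_push {A : Type*} [MetricSpace A] {E : Set (A × Z)} {F : A × Z → W}
    (hF : ContinuousOn F E) {μ : A → Bmeas n Z} (hμ : Continuous μ)
    (hE : ∀ a, DistributedOn (μ a) {z | (a, z) ∈ E}) :
    Continuous fun a => (μ a).push fun z => F (a, z) := by
  have : BorelSpace Z := ⟨rfl⟩
  have : BorelSpace W := ⟨rfl⟩
  have hμ' : Continuous fun a => (μ a).1 := continuous_subtype_val.comp hμ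
  refine continuous_induced_rng.2 (Metric.continuous_iff.2 fun a₀ ε hε => ?_)
  obtain ⟨S₀, hS₀E, hS₀⟩ := hE a₀
  obtain ⟨r, hr, hFr⟩ := hF.exists_pos_forall_dist_lt_of_finite (S₀.finite_toSet.image (a₀, ·))
    (Set.image_subset_iff.2 hS₀E) (half_pos hε)
  obtain ⟨δ, hδ, hμδ⟩ := Metric.continuous_iff.1 hμ' a₀ (min r (ε / 2)) (by positivity)
  refine ⟨min δ r, by positivity, fun a ha => ?_⟩
  obtain ⟨S, hSE, hS⟩ := hE a
  have hLP := levyProkhorovEDist_map_le (F := fun z => F (a, z)) (G := fun z => F (a₀, z))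
    S.countable_toSet (toMeasure_meas_compl_eq_zero hS) S₀.countable_toSet
    (toMeasure_meas_compl_eq_zero hS₀) (edist_lt_ofReal.2 (hμδ a (ha.trans_le (min_le_left _ _))))
    (min_le_right _ _) fun z hz z' hz' hzz' => hFr _ ⟨z', hz', rfl⟩ _ (hSE hz)
      (by
        rw [Prod.dist_eq]
        exact max_lt (ha.trans_le (min_le_right _ _)) (hzz'.trans_le (min_le_left _ _)))
  rw [← toMeasure_meas_push, ← toMeasure_meas_push] at hLP
  exact (ENNReal.toReal_le_of_le_ofReal (half_pos hε).le hLP).trans_lt (half_lt_self hε)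

end Bmeas

theorem exists_isNavAlg_of_homotopy {X Y : Type*} [MetricSpace X] [MetricSpace Y] {m k : ℕ}
    (hm : 2 ≤ m) {f : C(X, Y)} {g : C(Y, X)} (H : (f.comp g).Homotopy (ContinuousMap.id Y))
    {s : (Fin m → X) → Bmeas k (PathSp X)} (hs : IsNavAlg m k s) :
    ∃ s' : (Fin m → Y) → Bmeas k (PathSp Y), IsNavAlg m k s' := by
  obtain ⟨n, rfl⟩ : ∃ n, m = n + 1 := ⟨m - 1, by omega⟩
  have hn : 0 < n := by omega
  refine ⟨fun ys => (s (g ∘ ys)).push fun φ => transportMap H hn (ys, φ), ?_, fun ys => ?_⟩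
  · exact Bmeas.continuous_push (continuousOn_transportMap H hn)
      (hs.1.comp (continuous_pi fun j => g.continuous.comp (continuous_apply j)))
      fun ys => hs.2 (g ∘ ys)
  · exact (DistributedOn.push (hs.2 (g ∘ ys)) _).mono
      (Set.image_subset_iff.2 fun φ hφ => transportMap_mem_pathsThrough H hn hφ)

theorem dTC_le_of_comp_homotopic_id {X Y : Type*} [MetricSpace X] [MetricSpace Y] {m : ℕ}
    (hm : 2 ≤ m) {f : C(X, Y)} {g : C(Y, X)} (hfg : (f.comp g).Homotopic (ContinuousMap.id Y)) :
    dTC m Y ≤ dTC m X := by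
  obtain ⟨H⟩ := hfg
  refine sInf_le_sInf ?_
  rintro _ ⟨k, rfl, s, hs⟩
  obtain ⟨s', hs'⟩ := exists_isNavAlg_of_homotopy hm H hs
  exact ⟨k, rfl, s', hs'⟩

theorem dTC_homotopy_invariant_general (m : ℕ) (hm : 2 ≤ m) (X Y : Type) [MetricSpace X] [MetricSpace Y]
    (f : C(X, Y)) (g : C(Y, X))
    (hfg : (f.comp g).Homotopic (ContinuousMap.id Y)) :
    dTC m Y ≤ dTC m X ∧
      ((g.comp f).Homotopic (ContinuousMap.id X) → dTC m X = dTC m Y) :=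
  ⟨dTC_le_of_comp_homotopic_id hm hfg, fun hgf =>
    le_antisymm (dTC_le_of_comp_homotopic_id hm hgf) (dTC_le_of_comp_homotopic_id hm hfg)⟩

/-- `dTC_m` is a homotopy invariant: if `f : X → Y` is a homotopy domination (with right
homotopy inverse `g`), then `dTC_m(Y) ≤ dTC_m(X)`; if moreover `g` is a two-sided homotopy
inverse (so `X ≃ Y` in the homotopy category), then `dTC_m(X) = dTC_m(Y)`. -/
theorem dTC_homotopy_invariant (m : ℕ) (hm : 2 ≤ m) (X Y : Type) [MetricSpace X] [MetricSpace Y]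
    [PathConnectedSpace X] [PathConnectedSpace Y] (f : C(X, Y)) (g : C(Y, X))
    (hfg : (f.comp g).Homotopic (ContinuousMap.id Y)) :
    dTC m Y ≤ dTC m X ∧
      ((g.comp f).Homotopic (ContinuousMap.id X) → dTC m X = dTC m Y) :=
  dTC_homotopy_invariant_general m hm X Y f g hfg
end
end

section
/- For every m ≥ 2 and path-connected metric space X, dcat(X^{m−1}) ≤ dTC_m(X), where dcat denotes the distributional Lusternik–Schnirelmann category. -/
open MeasureTheory unitInterval

noncomputable section

/-!
Fix `x₀ : X` and put it in the first slot: a navigation algorithm on `X^{n+1}`, applied to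
`(x₀, y)`, gives a finitely supported measure on paths `φ` in `X` with `φ 0 = x₀` and
`φ t_{j+1} = y j`. Running `φ` backwards from time `t_{j+1}` to `0` in the `j`-th coordinate
turns each such `φ` into a path in `X^n` from `y` to the constant tuple `x₀`. This map of path
spaces is `1`-Lipschitz for the sup metrics, and pushforward along a `1`-Lipschitz map is
`1`-Lipschitz for the Lévy–Prokhorov metric, so the pushed-forward measures depend continuously
on `y` and form a contraction of `X^n` supported on as many paths as the navigation algorithm.
-/

open scoped ENNReal

section LevyProkhorov

variable {Ω Ω' : Type*} [MeasurableSpace Ω] [PseudoEMetricSpace Ω] [OpensMeasurableSpace Ω]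
  [MeasurableSpace Ω'] [PseudoEMetricSpace Ω'] [BorelSpace Ω'] {g : Ω → Ω'}

lemma levyProkhorovEDist_map_le_s3 (hg : LipschitzWith 1 g) (μ ν : Measure Ω) :
    levyProkhorovEDist (μ.map g) (ν.map g) ≤ levyProkhorovEDist μ ν := by
  have hmg : Measurable g := hg.continuous.measurable
  have map_le : ∀ (μ ν : Measure Ω) (ε : ℝ≥0∞) (B : Set Ω'),
      levyProkhorovEDist μ ν < ε → MeasurableSet B →
      μ.map g B ≤ ν.map g (Metric.thickening ε.toReal B) + ε := by
    intro μ ν ε B hε hB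
    rw [Measure.map_apply hmg hB, Measure.map_apply hmg Metric.isOpen_thickening.measurableSet]
    refine (left_measure_le_of_levyProkhorovEDist_lt hε (hmg hB)).trans
      (add_le_add_left (measure_mono fun x hx => ?_) _)
    obtain ⟨y, hyB, hxy⟩ := (Metric.mem_thickening_iff_exists_edist_lt _ _).mp hx
    exact (Metric.mem_thickening_iff_exists_edist_lt _ _).mpr
      ⟨g y, hyB, (by simpa using hg.edist_le_mul x y : edist (g x) (g y) ≤ _).trans_lt hxy⟩
  refine levyProkhorovEDist_le_of_forall _ _ _ fun ε B hε _ hB => ⟨?_, ?_⟩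
  · exact map_le μ ν ε B hε hB
  · exact map_le ν μ ε B (levyProkhorovEDist_comm μ ν ▸ hε) hB

lemma MeasureTheory.LevyProkhorov.lipschitzWith_map_probabilityMeasure
    (hg : LipschitzWith 1 g) :
    LipschitzWith 1 fun μ : LevyProkhorov (ProbabilityMeasure Ω) =>
      (toMeasureEquiv.symm ((toMeasureEquiv μ).map hg.continuous.measurable.aemeasurable) :
        LevyProkhorov (ProbabilityMeasure Ω')) := fun μ ν => by
  rw [ENNReal.coe_one, one_mul]
  exact levyProkhorovEDist_map_le_s3 hg _ _

end LevyProkhorov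

lemma MeasureTheory.ProbabilityMeasure.map_apply_finset_image_eq_one {Ω Ω' : Type*}
    [MeasurableSpace Ω] [MeasurableSpace Ω'] [MeasurableSingletonClass Ω'] [DecidableEq Ω']
    {g : Ω → Ω'} (μ : ProbabilityMeasure Ω) (hg : AEMeasurable g μ) {S : Finset Ω}
    (hS : μ S = 1) : μ.map hg (S.image g) = 1 := by
  refine le_antisymm (apply_le_one _ _) ?_
  rw [map_apply _ _ (S.image g).finite_toSet.measurableSet, ← hS]
  exact apply_mono μ fun z hz => Finset.mem_image_of_mem g hz

section Bmeas

variable {Z Z' : Type*} [MetricSpace Z] [MetricSpace Z'] {n : ℕ}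

def Bmeas.map (g : Z → Z') (hg : LipschitzWith 1 g) (μ : Bmeas n Z) : Bmeas n Z' :=
  letI : MeasurableSpace Z := borel Z
  haveI : BorelSpace Z := ⟨rfl⟩
  letI : MeasurableSpace Z' := borel Z'
  haveI : BorelSpace Z' := ⟨rfl⟩
  letI : DecidableEq Z' := Classical.decEq Z'
  ⟨LevyProkhorov.toMeasureEquiv.symm (μ.meas.map hg.continuous.measurable.aemeasurable), by
    obtain ⟨S, hcard, hS⟩ := μ.2
    exact ⟨S.image g, Finset.card_image_le.trans hcard,
      μ.meas.map_apply_finset_image_eq_one hg.continuous.measurable.aemeasurable hS⟩⟩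

lemma Bmeas.continuous_map {g : Z → Z'} (hg : LipschitzWith 1 g) :
    Continuous (Bmeas.map (n := n) g hg) :=
  letI : MeasurableSpace Z := borel Z
  haveI : BorelSpace Z := ⟨rfl⟩
  letI : MeasurableSpace Z' := borel Z'
  haveI : BorelSpace Z' := ⟨rfl⟩
  ((LevyProkhorov.lipschitzWith_map_probabilityMeasure hg).continuous.comp
    continuous_subtype_val).subtype_mk _

lemma DistributedOn.map {g : Z → Z'} (hg : LipschitzWith 1 g) {μ : Bmeas n Z} {A : Set Z}
    {A' : Set Z'} (hA : Set.MapsTo g A A') (h : DistributedOn μ A) :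
    DistributedOn (Bmeas.map g hg μ) A' := by
  let : MeasurableSpace Z := borel Z
  have : BorelSpace Z := ⟨rfl⟩
  let : MeasurableSpace Z' := borel Z'
  have : BorelSpace Z' := ⟨rfl⟩
  classical
  obtain ⟨S, hSA, hS⟩ := h
  refine ⟨S.image g, ?_,
    μ.meas.map_apply_finset_image_eq_one hg.continuous.measurable.aemeasurable hS⟩
  rw [Finset.coe_image]
  exact (hA.mono_left hSA).image_subset

end Bmeas

namespace ContinuousMap

variable {ι α β : Type*} [TopologicalSpace α] [TopologicalSpace β]

def piComp {X : Type*} [TopologicalSpace X] (r : ι → C(α, β)) (φ : C(β, X)) :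
    C(α, ι → X) :=
  pi fun j => φ.comp (r j)

@[simp]
lemma piComp_apply {X : Type*} [TopologicalSpace X] (r : ι → C(α, β)) (φ : C(β, X)) (t : α)
    (j : ι) :
    piComp r φ t j = φ (r j t) := rfl

lemma lipschitzWith_piComp [Fintype ι] [CompactSpace α] [CompactSpace β] {X : Type*}
    [PseudoMetricSpace X] (r : ι → C(α, β)) : LipschitzWith 1 (piComp (X := X) r) :=
  LipschitzWith.mk_one fun _ _ => (dist_le dist_nonneg).mpr fun t =>
    (dist_pi_le_iff dist_nonneg).mpr fun j => dist_apply_le_dist (r j t)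

end ContinuousMap

def unitInterval.rewindFrom (t : I) : C(I, I) :=
  ⟨fun s => t * σ s, by fun_prop⟩

@[simp]
lemma unitInterval.rewindFrom_zero (t : I) : rewindFrom t 0 = t := by
  simp [rewindFrom]

@[simp]
lemma unitInterval.rewindFrom_one (t : I) : rewindFrom t 1 = 0 := by
  simp [rewindFrom]

@[simp]
lemma tpt_zero (n : ℕ) : tpt (n + 1) 0 = 0 := by
  simp [tpt]

lemma IsNavAlg.exists_isContr {n k : ℕ} {X : Type*} [MetricSpace X]
    {s : (Fin (n + 1) → X) → Bmeas k (PathSp X)} (hs : IsNavAlg (n + 1) k s) (x₀ : X) :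
    ∃ H : (Fin n → X) → Bmeas k (PathSp (Fin n → X)), IsContr k (fun _ => x₀) H := by
  let g := ContinuousMap.piComp (X := X) fun j : Fin n => rewindFrom (tpt (n + 1) j.succ)
  refine ⟨fun y => Bmeas.map g (ContinuousMap.lipschitzWith_piComp _) (s (Fin.cons x₀ y)),
    (Bmeas.continuous_map _).comp (hs.1.comp (by fun_prop)), fun y => (hs.2 _).map _ ?_⟩
  intro φ hφ
  refine ⟨funext fun j => ?_, funext fun j => ?_⟩
  · simpa [g] using hφ j.succ
  · simpa [g] using hφ 0

theorem dcat_pi_le_dTC_succ (n : ℕ) (X : Type*) [MetricSpace X] [Nonempty X] :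
    dcat (Fin n → X) ≤ dTC (n + 1) X := by
  obtain ⟨x₀⟩ := ‹Nonempty X›
  refine sInf_le_sInf ?_
  rintro _ ⟨k, rfl, s, hs⟩
  exact ⟨k, rfl, fun _ => x₀, hs.exists_isContr x₀⟩

/-- For every `m ≥ 2` and path-connected metric space `X`, `dcat(X^{m-1}) ≤ dTC_m(X)`. -/
theorem dcat_pow_le_dTC (m : ℕ) (hm : 2 ≤ m) (X : Type) [MetricSpace X]
    [PathConnectedSpace X] :
    dcat (Fin (m - 1) → X) ≤ dTC m X := by
  obtain ⟨n, rfl⟩ : ∃ n, m = n + 1 := ⟨m - 1, by omega⟩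
  simpa using dcat_pi_le_dTC_succ n X
end
end

section
/- If dTC_m(X) < n, then X^m can be covered by n (not necessarily open) sets A_1, ..., A_n such that over each A_i the pullback σ_n^i of the map SP^{n!}(π_m) : SP^{n!}(P(X)) → SP^{n!}(X^m) along the restricted diagonal inclusion ∂_n : A_i → SP^{n!}(X^m) admits a continuous section. -/
open MeasureTheory unitInterval

noncomputable section

/-- The homotopy lifting property with respect to all spaces (Hurewicz fibration). -/
def IsHurFib {E B : Type*} [TopologicalSpace E] [TopologicalSpace B] (p : E → B) : Prop :=
  ∀ (Z : Type) [TopologicalSpace Z] (f : C(Z, E)) (H : C(Z × unitInterval, B)),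
    (∀ z, H (z, 0) = p (f z)) →
      ∃ G : C(Z × unitInterval, E),
        (∀ z t, p (G (z, t)) = H (z, t)) ∧ ∀ z, G (z, 0) = f z

/-- `E_k(p)`: the space of probability measures supported on at most `k` points of a
single fiber of `p`, as a subspace of `B_k(E)`. -/
def FibMeas (k : ℕ) {E B : Type*} [MetricSpace E] (p : E → B) : Type _ :=
  {μ : Bmeas k E // ∃ b : B, DistributedOn μ (p ⁻¹' {b})}

instance (k : ℕ) {E B : Type*} [MetricSpace E] (p : E → B) :
    TopologicalSpace (FibMeas k p) := instTopologicalSpaceSubtype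

/-- The map `B_k(p) : E_k(p) → B` sending a fiberwise supported measure to its base point. -/
noncomputable def fibProj (k : ℕ) {E B : Type*} [MetricSpace E] (p : E → B)
    (μ : FibMeas k p) : B :=
  Classical.choose μ.2

/-- The distributional sectional category of a map `p : E → B`. -/
noncomputable def dsecat {E B : Type*} [MetricSpace E] [MetricSpace B] (p : E → B) : ℕ∞ :=
  sInf {c : ℕ∞ | ∃ k : ℕ, c = k ∧
    ∃ s : B → FibMeas (k + 1) p, Continuous s ∧ ∀ b, fibProj (k + 1) p (s b) = b}

/-- The fibration `π_m : P(X) → X^m`, `φ ↦ (φ(t_1), …, φ(t_m))`. -/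
def piFib (m : ℕ) (X : Type*) [TopologicalSpace X] (φ : PathSp X) : Fin m → X :=
  fun j => φ (tpt m j)

/-- Tuples are identified if they differ by a permutation of coordinates. -/
def spSetoid (N : ℕ) (Z : Type*) : Setoid (Fin N → Z) where
  r f g := ∃ p : Equiv.Perm (Fin N), ∀ i, f (p i) = g i
  iseqv :=
    ⟨fun f => ⟨Equiv.refl _, fun _ => rfl⟩,
      fun {f g} h => h.elim fun p hp =>
        ⟨p.symm, fun i => by rw [← hp (p.symm i), Equiv.apply_symm_apply]⟩,
      fun {f g h} h1 h2 => h1.elim fun p hp => h2.elim fun q hq =>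
        ⟨q.trans p, fun i => by rw [Equiv.trans_apply, hp, hq]⟩⟩

/-- The `N`-th symmetric product `SP^N(Z) = Z^N / S_N`, with the quotient topology. -/
def SP (N : ℕ) (Z : Type*) [TopologicalSpace Z] : Type _ := Quotient (spSetoid N Z)

instance (N : ℕ) (Z : Type*) [TopologicalSpace Z] : TopologicalSpace (SP N Z) :=
  instTopologicalSpaceQuotient

/-- The map `SP^N(F) : SP^N(Z) → SP^N(W)` induced by `F : Z → W` by functoriality. -/
def SPmap (N : ℕ) {Z W : Type*} [TopologicalSpace Z] [TopologicalSpace W] (F : Z → W) :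
    SP N Z → SP N W :=
  Quot.map (fun f => F ∘ f)
    (fun f g h => h.elim fun p hp => ⟨p, fun i => congrArg F (hp i)⟩)

/-- The diagonal inclusion `Z → SP^N(Z)`, `z ↦ N·z`. -/
def spDiag (N : ℕ) {Z : Type*} [TopologicalSpace Z] (z : Z) : SP N Z :=
  Quotient.mk (spSetoid N Z) (fun _ => z)

/-! On the set `A i` where `s x` has exactly `i + 1` atoms, these atoms move continuously as an
unordered tuple: a measure Lévy–Prokhorov close to `s x₀` gives positive mass to a small ball
around each atom of `s x₀`, and having as many atoms as `s x₀` it has exactly one atom in each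
of these disjoint balls. Repeating each atom `n! / (i + 1)` times gives a point of `SP^{n!}(P X)` lying over
`n! · x`, because every atom of `s x` is a path through `x`. -/

namespace SP

open Filter Topology

theorem mk_eq_mk_of_range_subset {Z : Type*} {i : ℕ} {f g : Fin i → Z}
    (hf : Function.Injective f) (h : Set.range f ⊆ Set.range g) :
    Quotient.mk (spSetoid i Z) f = Quotient.mk (spSetoid i Z) g := by
  choose p hp using fun l => h ⟨l, rfl⟩
  have hp_inj : Function.Injective p := fun a b hab => hf (by rw [← hp a, ← hp b, hab])
  refine (Quotient.sound ?_).symm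
  exact ⟨Equiv.ofBijective p (Finite.injective_iff_bijective.1 hp_inj), hp⟩

theorem continuousAt_of_eventually_exists_dist_lt {Y Z : Type*} [TopologicalSpace Y]
    [PseudoMetricSpace Z] {i : ℕ} {F : Y → SP i Z} {y₀ : Y} {f₀ : Fin i → Z}
    (h₀ : F y₀ = Quotient.mk _ f₀)
    (h : ∀ ε > 0, ∀ᶠ y in 𝓝 y₀, ∃ f, F y = Quotient.mk _ f ∧ dist f f₀ < ε) :
    ContinuousAt F y₀ := by
  intro U hU
  rw [h₀] at hU
  obtain ⟨ε, hε, hball⟩ :=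
    Metric.mem_nhds_iff.1 (continuous_quot_mk.continuousAt.preimage_mem_nhds hU)
  refine mem_map.2 ?_
  filter_upwards [h ε hε] with y ⟨f, hFy, hf⟩
  rw [Set.mem_preimage, hFy]
  exact hball hf

/-- Each point of `SP^i(W)` taken `q` times, the `N = i * q` points indexed through `e`. -/
def replicate {W : Type*} [TopologicalSpace W] {N i q : ℕ} (e : Fin N ≃ Fin i × Fin q) :
    SP i W → SP N W :=
  Quot.map (fun f => f ∘ Prod.fst ∘ e) <| by
    rintro f g ⟨p, hp⟩
    exact ⟨e.trans ((p.prodCongr (Equiv.refl _)).trans e.symm), fun l => by simp [hp]⟩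

theorem continuous_replicate {W : Type*} [TopologicalSpace W] {N i q : ℕ}
    (e : Fin N ≃ Fin i × Fin q) : Continuous (replicate (W := W) e) :=
  continuous_quot_lift _ (continuous_quot_mk.comp (continuous_pi fun _ => continuous_apply _))

theorem SPmap_replicate_mk {V W : Type*} [TopologicalSpace V] [TopologicalSpace W] {N i q : ℕ}
    (e : Fin N ≃ Fin i × Fin q) {F : V → W} {f : Fin i → V} {w : W}
    (h : ∀ l, F (f l) = w) :
    SPmap N F (replicate e (Quotient.mk _ f)) = spDiag N w :=
  congrArg (Quotient.mk _) (funext fun _ => h _)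

end SP

theorem borelSpace_borel (Z : Type*) [TopologicalSpace Z] : @BorelSpace Z _ (borel Z) :=
  @BorelSpace.mk Z _ (borel Z) rfl

namespace Bmeas

open Metric Filter Topology

attribute [local instance] borel borelSpace_borel

variable {Z : Type*} [MetricSpace Z] {k : ℕ} (μ : Bmeas k Z)

theorem measure_compl_eq_zero {A : Set Z} (hA : MeasurableSet A) (h : μ.meas A = 1) :
    (μ.meas : Measure Z) Aᶜ = 0 := by
  rw [prob_compl_eq_zero_iff hA, ← ProbabilityMeasure.ennreal_coeFn_eq_coeFn_toMeasure, h,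
    ENNReal.coe_one]

theorem setOf_measure_singleton_ne_zero_subset {S : Finset Z} (hS : μ.meas S = 1) :
    {x | (μ.meas : Measure Z) {x} ≠ 0} ⊆ S := fun x hx => by
  by_contra hxS
  exact hx (measure_mono_null (Set.singleton_subset_iff.2 hxS)
    (μ.measure_compl_eq_zero S.measurableSet hS))

def atoms : Finset Z :=
  (μ.2.choose.finite_toSet.subset
    (μ.setOf_measure_singleton_ne_zero_subset μ.2.choose_spec.2)).toFinset

variable {μ}

@[simp]
theorem mem_atoms {x : Z} : x ∈ μ.atoms ↔ (μ.meas : Measure Z) {x} ≠ 0 := by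
  simp [atoms]

theorem atoms_subset {S : Finset Z} (hS : μ.meas S = 1) : μ.atoms ⊆ S := fun _ hx =>
  μ.setOf_measure_singleton_ne_zero_subset hS (mem_atoms.1 hx)

variable (μ)

theorem card_atoms_le : μ.atoms.card ≤ k :=
  (Finset.card_le_card (atoms_subset μ.2.choose_spec.2)).trans μ.2.choose_spec.1

theorem measure_compl_atoms : (μ.meas : Measure Z) (μ.atoms : Set Z)ᶜ = 0 := by
  obtain ⟨S, -, hS⟩ := μ.2
  have hdiff : (μ.meas : Measure Z) ((S : Set Z) \ μ.atoms) = 0 := by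
    rw [← Set.biUnion_of_singleton ((S : Set Z) \ μ.atoms),
      measure_biUnion_null_iff S.finite_toSet.sdiff.countable]
    intro x hx
    simpa using hx.2
  refine measure_mono_null (fun x hx => ?_) (measure_union_null (μ.measure_compl_eq_zero
    S.measurableSet hS) hdiff)
  by_cases hxS : x ∈ (S : Set Z)
  exacts [Or.inr ⟨hxS, hx⟩, Or.inl hxS]

theorem atoms_nonempty : μ.atoms.Nonempty := by
  rw [Finset.nonempty_iff_ne_empty]
  intro h
  simpa [h] using μ.measure_compl_atoms

theorem exists_mem_atoms_of_measure_ne_zero {B : Set Z} (hB : (μ.meas : Measure Z) B ≠ 0) :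
    ∃ x ∈ μ.atoms, x ∈ B := by
  by_contra! h
  exact hB (measure_mono_null (fun x hxB hx => h x hx hxB) μ.measure_compl_atoms)

variable {μ}

theorem atoms_subset_of_distributedOn {A : Set Z} (h : DistributedOn μ A) : ↑μ.atoms ⊆ A := by
  obtain ⟨S, hSA, hS⟩ := h
  exact fun x hx => hSA (atoms_subset hS hx)

theorem exists_mem_atoms_dist_lt {ν : Bmeas k Z} {δ : ℝ} (hδ : 0 < δ)
    (hd : dist ν.1 μ.1 < δ)
    {x : Z} (hx : ENNReal.ofReal δ < (μ.meas : Measure Z) {x}) :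
    ∃ y ∈ ν.atoms, dist y x < δ := by
  have hball :
      (μ.meas : Measure Z) {x} ≤ (ν.meas : Measure Z) (ball x δ) + ENNReal.ofReal δ := by
    have := left_measure_le_of_levyProkhorovEDist_lt
      (edist_lt_ofReal.2 ((dist_comm _ _).trans_lt hd)) (measurableSet_singleton x)
    rwa [ENNReal.toReal_ofReal hδ.le, thickening_singleton] at this
  refine ν.exists_mem_atoms_of_measure_ne_zero (B := ball x δ) fun h0 => ?_
  rw [h0, zero_add] at hball
  exact hball.not_gt hx

variable {i : ℕ}

def atomsTuple (μ : {μ : Bmeas k Z // μ.atoms.card = i}) : Fin i → Z :=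
  fun l => (μ.1.atoms.equivFinOfCardEq μ.2).symm l

theorem atomsTuple_injective (μ : {μ : Bmeas k Z // μ.atoms.card = i}) :
    Function.Injective (atomsTuple μ) :=
  Subtype.val_injective.comp (Equiv.injective _)

theorem atomsTuple_mem_atoms (μ : {μ : Bmeas k Z // μ.atoms.card = i}) (l : Fin i) :
    atomsTuple μ l ∈ μ.1.atoms :=
  ((μ.1.atoms.equivFinOfCardEq μ.2).symm l).2

theorem range_atomsTuple (μ : {μ : Bmeas k Z // μ.atoms.card = i}) :
    Set.range (atomsTuple μ) = μ.1.atoms := by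
  refine (Set.range_subset_iff.2 (atomsTuple_mem_atoms μ)).antisymm fun z hz => ?_
  exact ⟨μ.1.atoms.equivFinOfCardEq μ.2 ⟨z, hz⟩, by simp [atomsTuple]⟩

def atomsSP (μ : {μ : Bmeas k Z // μ.atoms.card = i}) : SP i Z :=
  Quotient.mk _ (atomsTuple μ)

theorem continuous_atomsSP :
    Continuous (atomsSP : {μ : Bmeas k Z // μ.atoms.card = i} → SP i Z) := by
  rw [continuous_iff_continuousAt]
  intro μ₀
  refine SP.continuousAt_of_eventually_exists_dist_lt rfl fun ε hε => ?_
  set x := atomsTuple μ₀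
  have hsmall : ∀ᶠ δ in 𝓝[>] (0 : ℝ), δ ≤ ε ∧
      (∀ l, ENNReal.ofReal δ < (μ₀.1.meas : Measure Z) {x l}) ∧
      ∀ a b, a ≠ b → 2 * δ < dist (x a) (x b) := by
    refine nhdsWithin_le_nhds <| (eventually_le_nhds hε).and <|
      (eventually_all.2 fun l => ?_).and (eventually_all.2 fun a => eventually_all.2 fun b => ?_)
    · exact ENNReal.continuous_ofReal.tendsto' 0 0 ENNReal.ofReal_zero |>.eventually_lt_const
        (pos_iff_ne_zero.2 (mem_atoms.1 (atomsTuple_mem_atoms μ₀ l)))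
    · refine eventually_imp_distrib_left.2 fun hab => ?_
      exact (continuous_const.mul continuous_id).tendsto' 0 0 (mul_zero 2) |>.eventually_lt_const
        (dist_pos.2 ((atomsTuple_injective μ₀).ne hab))
  obtain ⟨δ, ⟨hδε, hδ_mass, hδ_sep⟩, hδ⟩ := (hsmall.and self_mem_nhdsWithin).exists
  have hval : Continuous fun ν : {μ : Bmeas k Z // μ.atoms.card = i} => ν.1.1 :=
    continuous_subtype_val.comp continuous_subtype_val
  have hnhds : {ν | dist ν.1.1 μ₀.1.1 < δ} ∈ 𝓝 μ₀ :=
    hval.continuousAt.preimage_mem_nhds (Metric.ball_mem_nhds μ₀.1.1 hδ)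
  filter_upwards [hnhds] with ν hν
  choose y hy_atom hy_near using fun l => exists_mem_atoms_dist_lt hδ hν (hδ_mass l)
  have hy_inj : Function.Injective y := fun a b hab => by
    by_contra hne
    have hb : dist (y a) (x b) < δ := hab ▸ hy_near b
    linarith [dist_triangle_left (x a) (x b) (y a), hy_near a, hδ_sep a b hne]
  refine ⟨y, (SP.mk_eq_mk_of_range_subset hy_inj ?_).symm,
    (dist_pi_lt_iff hε).2 fun l => (hy_near l).trans_le hδε⟩
  rintro _ ⟨l, rfl⟩
  exact range_atomsTuple ν ▸ hy_atom l

end Bmeas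

theorem cover_with_sections_of_dTC_lt_general (m : ℕ) (X : Type) [MetricSpace X]
    (n : ℕ) (h : dTC m X < (n : ℕ∞)) :
    ∃ A : Fin n → Set (Fin m → X),
      (∀ x, ∃ i, x ∈ A i) ∧
      ∀ i : Fin n,
        ∃ sec : A i → {q : A i × SP (Nat.factorial n) (PathSp X) //
            SPmap (Nat.factorial n) (piFib m X) q.2 = spDiag (Nat.factorial n) (q.1 : Fin m → X)},
          Continuous sec ∧ ∀ x, (sec x).1.1 = x := by
  obtain ⟨_, ⟨k, rfl, s, hs_cont, hs_nav⟩, hlt⟩ := sInf_lt_iff.1 h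
  have hkn : k < n := by exact_mod_cast hlt
  refine ⟨fun i => {x | (s x).atoms.card = i + 1}, fun x => ?_, fun i => ?_⟩
  · have := (s x).atoms_nonempty.card_pos
    have := (s x).card_atoms_le
    exact ⟨⟨(s x).atoms.card - 1, by omega⟩, by simp only [Set.mem_ofPred_eq]; omega⟩
  · obtain ⟨q, hq⟩ := Nat.dvd_factorial i.succ_pos i.isLt
    let e := (finCongr hq).trans finProdFinEquiv.symm
    have hfib (x : {x // (s x).atoms.card = i + 1}) :=
      SP.SPmap_replicate_mk e (f := Bmeas.atomsTuple ⟨s x, x.2⟩) (F := piFib m X) fun l =>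
        funext <| Bmeas.atoms_subset_of_distributedOn (hs_nav x)
          (Bmeas.atomsTuple_mem_atoms ⟨s x, x.2⟩ l)
    refine ⟨fun x => ⟨(x, SP.replicate e (Bmeas.atomsSP ⟨s x, x.2⟩)), hfib x⟩, ?_,
      fun _ => rfl⟩
    have hatoms : Continuous fun x : {x // (s x).atoms.card = i + 1} =>
        Bmeas.atomsSP ⟨s x, x.2⟩ :=
      Bmeas.continuous_atomsSP.comp ((hs_cont.comp continuous_subtype_val).subtype_mk _)
    exact (continuous_id.prodMk ((SP.continuous_replicate e).comp hatoms)).subtype_mk _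

/-- If `dTC_m(X) < n`, then `X^m` is covered by `n` sets `A i` over each of which the pullback
of `SP^{n!}(π_m)` along the restricted diagonal inclusion admits a continuous section. -/
theorem cover_with_sections_of_dTC_lt (m : ℕ) (hm : 2 ≤ m) (X : Type) [MetricSpace X]
    [PathConnectedSpace X] (n : ℕ) (hn : 1 ≤ n) (h : dTC m X < (n : ℕ∞)) :
    ∃ A : Fin n → Set (Fin m → X),
      (∀ x, ∃ i, x ∈ A i) ∧
      ∀ i : Fin n,
        ∃ sec : A i → {q : A i × SP (Nat.factorial n) (PathSp X) //
            SPmap (Nat.factorial n) (piFib m X) q.2 = spDiag (Nat.factorial n) (q.1 : Fin m → X)},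
          Continuous sec ∧ ∀ x, (sec x).1.1 = x :=
  cover_with_sections_of_dTC_lt_general m X n h
end
end
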